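/- arXiv:1810.05146 — 5 statements merged into one kernel-verified Lean document; each statement's English description precedes it below -/
import Mathlib

section
/- For all m ≥ 1, c_m ≤ 3·c_{m-1}. -/
/-- Number of nontrivial proper divisors of `n`: divisors `d` with `1 < d < n`. -/
def ntpd (n : ℕ) : ℕ := (n.divisors.filter (fun d => 1 < d ∧ d < n)).card

/-- `cseq m` is the smallest positive odd integer with at least `m` nontrivial
proper divisors (with `cseq 0 = 3` by convention). -/
noncomputable def cseq (m : ℕ) : ℕ := if m = 0 then 3 else sInf {n | Odd n ∧ 0 < n ∧ m ≤ ntpd n}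

lemma ntpd_succ (n : ℕ) (hn : 1 < n) : ntpd n + 1 ≤ ntpd (3 * n) := by
  unfold ntpd
  have hsub : insert n (n.divisors.filter (fun d => 1 < d ∧ d < n)) ⊆
      (3 * n).divisors.filter (fun d => 1 < d ∧ d < 3 * n) := by
    intro d hd
    simp only [Finset.mem_insert, Finset.mem_filter, Nat.mem_divisors] at hd ⊢
    rcases hd with rfl | ⟨⟨hdvd, h0⟩, h1, h2⟩
    · exact ⟨⟨Dvd.dvd.mul_left dvd_rfl 3, by omega⟩, hn, by omega⟩
    · exact ⟨⟨hdvd.mul_left 3, by omega⟩, h1, by omega⟩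
  have hcard := Finset.card_le_card hsub
  rw [Finset.card_insert_of_notMem (by simp)] at hcard
  omega

lemma ntpd_pow (k : ℕ) : k ≤ ntpd (3 ^ (k + 1)) := by
  induction k with
  | zero => simp
  | succ k ih =>
    have h1 : 1 < 3 ^ (k + 1) := one_lt_pow₀ (by omega) (by norm_num)
    have := ntpd_succ (3 ^ (k + 1)) h1
    have heq : 3 ^ (k + 1 + 1) = 3 * 3 ^ (k + 1) := by ring
    rw [heq]
    omega

lemma cseq_props (k : ℕ) : Odd (cseq k) ∧ 1 < cseq k ∧ k ≤ ntpd (cseq k) := by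
  rcases Nat.eq_zero_or_pos k with rfl | hk
  · refine ⟨by rw [show cseq 0 = 3 from by simp [cseq]]; decide, by norm_num [cseq], by simp⟩
  · have hkne : k ≠ 0 := by omega
    have hne : {n | Odd n ∧ 0 < n ∧ k ≤ ntpd n}.Nonempty := by
      refine ⟨3 ^ (k + 1), Odd.pow ⟨1, by norm_num⟩, pow_pos (by norm_num) _, ntpd_pow k⟩
    have hmem := Nat.sInf_mem hne
    rw [show cseq k = sInf {n | Odd n ∧ 0 < n ∧ k ≤ ntpd n} from by simp [cseq, hkne]]
    obtain ⟨ho, hp, hnt⟩ := hmem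
    refine ⟨ho, ?_, hnt⟩
    by_contra h
    push_neg at h
    interval_cases (sInf {n | Odd n ∧ 0 < n ∧ k ≤ ntpd n})
    · have h0 : ntpd 1 = 0 := by decide
      omega

theorem cseq_le_three_mul (m : ℕ) (hm : 1 ≤ m) : cseq m ≤ 3 * cseq (m - 1) := by
  obtain ⟨ho, h1, hnt⟩ := cseq_props (m - 1)
  set n := cseq (m - 1) with hn
  have hmem : 3 * n ∈ {x | Odd x ∧ 0 < x ∧ m ≤ ntpd x} := by
    refine ⟨Odd.mul ⟨1, by norm_num⟩ ho, by omega, ?_⟩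
    have := ntpd_succ n h1
    omega
  have hmne : m ≠ 0 := by omega
  rw [show cseq m = sInf {x | Odd x ∧ 0 < x ∧ m ≤ ntpd x} from by simp [cseq, hmne]]
  exact Nat.sInf_le hmem
end

section
/- For all natural numbers r and s, c_r · c_s ≥ c_{r+s+1}. -/
lemma ntpd_mul {a b : ℕ} (ha : 1 < a) (hb : 1 < b) :
    ntpd a + ntpd b + 1 ≤ ntpd (a * b) := by
  classical
  have ha0 : 0 < a := by omega
  have hb0 : 0 < b := by omega
  have hab : a < a * b := by nlinarith
  set S1 := a.divisors.filter (fun d => 1 < d ∧ d < a) with hS1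
  set S2 := (b.divisors.filter (fun e => 1 < e ∧ e < b)).image (fun e => a * e) with hS2
  have hsub : S1 ∪ S2 ∪ {a} ⊆ (a*b).divisors.filter (fun d => 1 < d ∧ d < a*b) := by
    intro d hd
    simp only [Finset.mem_union, Finset.mem_singleton, hS1, hS2, Finset.mem_image,
      Finset.mem_filter, Nat.mem_divisors] at hd ⊢
    rcases hd with (⟨⟨hd1, _⟩, hd2, hd3⟩ | ⟨e, ⟨⟨he1, _⟩, he2, he3⟩, rfl⟩) | rfl
    · exact ⟨⟨hd1.mul_right b, by positivity⟩, hd2, by nlinarith⟩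
    · exact ⟨⟨mul_dvd_mul_left a he1, by positivity⟩, by nlinarith,
        (Nat.mul_lt_mul_left ha0).mpr he3⟩
    · exact ⟨⟨dvd_mul_right d b, by positivity⟩, ha, hab⟩
  have hcard := Finset.card_le_card hsub
  have hd12 : Disjoint S1 S2 := by
    rw [Finset.disjoint_left]
    intro x hx1 hx2
    simp only [hS1, hS2, Finset.mem_image, Finset.mem_filter, Nat.mem_divisors] at hx1 hx2
    obtain ⟨e, ⟨_, he2, _⟩, rfl⟩ := hx2
    nlinarith [hx1.2.2]
  have hda : Disjoint (S1 ∪ S2) ({a} : Finset ℕ) := by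
    rw [Finset.disjoint_right]
    intro x hx hx'
    simp only [Finset.mem_singleton] at hx
    subst hx
    simp only [hS1, hS2, Finset.mem_union, Finset.mem_image, Finset.mem_filter,
      Nat.mem_divisors] at hx'
    rcases hx' with ⟨_, _, h⟩ | ⟨e, ⟨_, he2, _⟩, h⟩
    · omega
    · nlinarith
  have hc2 : S2.card = ntpd b := by
    rw [hS2, Finset.card_image_of_injective _ (fun x y h => Nat.eq_of_mul_eq_mul_left ha0 h)]
    rfl
  rw [Finset.card_union_of_disjoint hda, Finset.card_union_of_disjoint hd12,
    Finset.card_singleton, hc2] at hcard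
  exact hcard

lemma mem_set (m : ℕ) : (3:ℕ)^(m+1) ∈ {n | Odd n ∧ 0 < n ∧ m ≤ ntpd n} := by
  refine ⟨Odd.pow (by decide), by positivity, ?_⟩
  have hsub : (Finset.Icc 1 m).image (fun i => (3:ℕ)^i) ⊆
      ((3:ℕ)^(m+1)).divisors.filter (fun d => 1 < d ∧ d < 3^(m+1)) := by
    intro d hd
    simp only [Finset.mem_image, Finset.mem_Icc, Finset.mem_filter, Nat.mem_divisors] at hd ⊢
    obtain ⟨i, ⟨hi1, hi2⟩, rfl⟩ := hd
    refine ⟨⟨pow_dvd_pow 3 (by omega), by positivity⟩,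
      Nat.one_lt_pow (by omega) (by norm_num), Nat.pow_lt_pow_right (by norm_num) (by omega)⟩
  have := Finset.card_le_card hsub
  rwa [Finset.card_image_of_injective _ (Nat.pow_right_injective (by norm_num)),
    Nat.card_Icc, add_tsub_cancel_right] at this

lemma cseq_spec (m : ℕ) : Odd (cseq m) ∧ 1 < cseq m ∧ m ≤ ntpd (cseq m) := by
  rcases eq_or_ne m 0 with rfl | hm
  · rw [cseq, if_pos rfl]
    exact ⟨by decide, by norm_num, Nat.zero_le _⟩
  · have hne : {n | Odd n ∧ 0 < n ∧ m ≤ ntpd n}.Nonempty := ⟨_, mem_set m⟩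
    have hmem := Nat.sInf_mem hne
    rw [cseq, if_neg hm]
    obtain ⟨h1, h2, h3⟩ := hmem
    refine ⟨h1, ?_, h3⟩
    by_contra h
    have h1' : sInf {n | Odd n ∧ 0 < n ∧ m ≤ ntpd n} = 1 := by omega
    rw [h1'] at h3
    have : ntpd 1 = 0 := by decide
    omega

theorem cseq_mul_ge (r s : ℕ) : cseq r * cseq s ≥ cseq (r + s + 1) := by
  obtain ⟨hor, har, hnr⟩ := cseq_spec r
  obtain ⟨hos, has, hns⟩ := cseq_spec s
  have hmem : cseq r * cseq s ∈ {n | Odd n ∧ 0 < n ∧ r + s + 1 ≤ ntpd n} := by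
    refine ⟨hor.mul hos, by positivity, ?_⟩
    have := ntpd_mul har has
    omega
  rw [show cseq (r + s + 1) = sInf {n | Odd n ∧ 0 < n ∧ r + s + 1 ≤ ntpd n} from
    if_neg (by omega)]
  exact Nat.sInf_le hmem
end

section
/- Let a = 3^{a_1}·5^{a_2}·⋯·p_j^{a_j} and b = 3^{b_1}·5^{b_2}·⋯·p_j^{b_j} be positive integers (with exponents a_i, b_i ≥ 0), where a has at least r+2 total divisors and b has at least s+2 total divisors. Then the total number of divisors of a·b, which equals ∏_{i=1}^j (a_i + b_i + 1), is at least r + s + 3. More precisely, ∏_i (a_i + b_i + 1) ≥ ∏_i (a_i + 1) + ∏_i (b_i + 1) − 1. -/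
open Finset in
lemma prod_add_one_key (j : ℕ) (a b : ℕ → ℕ) :
    ∏ i ∈ range j, (a i + 1) + ∏ i ∈ range j, (b i + 1) ≤
      ∏ i ∈ range j, (a i + b i + 1) + 1 := by
  induction j with
  | zero => simp
  | succ n ih =>
    rw [prod_range_succ, prod_range_succ, prod_range_succ]
    have hA : 1 ≤ ∏ i ∈ range n, (a i + 1) := Finset.one_le_prod' fun i _ => by omega
    have hB : 1 ≤ ∏ i ∈ range n, (b i + 1) := Finset.one_le_prod' fun i _ => by omega
    nlinarith [ih, hA, hB]

open Finset in
theorem prod_add_one_inequality (j : ℕ) (a b : ℕ → ℕ) (r s : ℕ)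
    (ha : r + 2 ≤ ∏ i ∈ range j, (a i + 1))
    (hb : s + 2 ≤ ∏ i ∈ range j, (b i + 1)) :
    (∏ i ∈ range j, (a i + b i + 1) ≥
        ∏ i ∈ range j, (a i + 1) + ∏ i ∈ range j, (b i + 1) - 1) ∧
    r + s + 3 ≤ ∏ i ∈ range j, (a i + b i + 1) := by
  have key := prod_add_one_key j a b
  omega
end

section
/- For any reduced fraction p/q with q odd and positive, there exist a unique integer r and a unique even-length sequence of nonzero even integers a_1, ..., a_k such that p/q = r + [a_1, a_2, ..., a_k] (continued fraction), and moreover p and r have the same parity. -/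
/-!
For a list `l` of nonzero even integers, `cf l` lies in `(-1, 1)`, and its numerator is even
exactly when the length of `l` is even, its denominator being odd in that case: the step
`x ↦ 1 / (a + x)` with `a` even exchanges the parities of numerator and denominator.

Hence in `p / q = r + cf l` with `l` of even length, `p ≡ r (mod 2)`; two such integers at
distance `< 2` coincide, and peeling off the entries one by one (`a + cf t` determines the even
integer `a` in the same way) gives uniqueness. For existence, start from `x` with `|x| < 1`
whose numerator and denominator are not both odd. Then `1 / x` is not an odd integer, so some
even `a ≠ 0` has `|1 / x - a| < 1`, and the remainder `1 / x - a` is again of this kind, with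
denominator `|num x| < den x`; so the recursion terminates.
-/

/-- The continued fraction `[a_1, ..., a_k] = 1/(a_1 + 1/(a_2 + ⋯ + 1/a_k))`,
evaluated in `ℚ`. -/
def cf (l : List ℤ) : ℚ := l.foldr (fun a r => 1 / ((a : ℚ) + r)) 0

namespace Rat

theorem num_intCast_add (n : ℤ) (q : ℚ) : ((n : ℚ) + q).num = n * q.den + q.num := by
  have h := mul_den_eq_num ((n : ℚ) + q)
  rw [intCast_add_den, add_mul, mul_den_eq_num] at h
  exact_mod_cast h.symm

theorem even_num_intCast_add_iff {q : ℚ} (hq : Odd q.den) (n : ℤ) :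
    Even ((n : ℚ) + q).num ↔ (Even n ↔ Even q.num) := by
  rw [num_intCast_add, Int.even_add, Int.even_mul, Int.even_coe_nat]
  simp [Nat.not_even_iff_odd.mpr hq]

theorem even_num_inv_iff {q : ℚ} (hq : q ≠ 0) : Even q⁻¹.num ↔ Even q.den := by
  rw [← Int.natAbs_even, num_inv, Int.natAbs_mul, Int.natAbs_sign_of_ne_zero (num_ne_zero.mpr hq),
    one_mul, Int.natAbs_natCast]

theorem even_den_inv_iff {q : ℚ} (hq : q ≠ 0) : Even q⁻¹.den ↔ Even q.num := by
  rw [den_inv_of_ne_zero hq, Int.natAbs_even]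

theorem even_den_inv_intCast_add_iff {a : ℤ} (ha : Even a) {q : ℚ} (hq : (a : ℚ) + q ≠ 0) :
    Even ((a : ℚ) + q)⁻¹.den ↔ Even q.num := by
  rw [even_den_inv_iff hq, num_intCast_add, Int.even_add]
  simp [ha]

theorem natAbs_num_lt_den_of_abs_lt_one {q : ℚ} (hq : |q| < 1) : q.num.natAbs < q.den := by
  have hden : (0 : ℚ) < q.den := by exact_mod_cast q.den_pos
  have h : ((q.num.natAbs : ℤ) : ℚ) = |q| * q.den := by
    rw [Int.natCast_natAbs, Int.cast_abs, ← mul_den_eq_num, abs_mul, abs_of_pos hden]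
  have : ((q.num.natAbs : ℤ) : ℚ) < q.den := by
    rw [h]; exact mul_lt_of_lt_one_left hden hq
  exact_mod_cast this

end Rat

theorem exists_even_sub_and_abs_sub_lt_one (y : ℚ) (s : ℤ)
    (h : ∀ n : ℤ, y = n → Even (n - s)) : ∃ r : ℤ, Even (r - s) ∧ |y - r| < 1 := by
  have hfloor := Int.floor_le y
  have hlt := Int.lt_floor_add_one y
  by_cases hs : Even (⌊y⌋ - s)
  · exact ⟨⌊y⌋, hs, abs_lt.mpr ⟨by linarith, by linarith⟩⟩
  · have hy : (⌊y⌋ : ℚ) < y := lt_of_le_of_ne hfloor fun h' => hs (h _ h'.symm)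
    refine ⟨⌊y⌋ + 1, ?_, abs_lt.mpr ⟨?_, ?_⟩⟩
    · rw [Int.not_even_iff_odd] at hs
      rw [add_sub_right_comm]; exact hs.add_one
    all_goals push_cast; linarith

theorem eq_of_intCast_add_eq_intCast_add {m n : ℤ} {x y : ℚ} (hx : |x| < 1) (hy : |y| < 1)
    (hmn : Even (m - n)) (h : (m : ℚ) + x = n + y) : m = n := by
  have hlt : |((m - n : ℤ) : ℚ)| < 2 := by
    push_cast
    rw [show (m : ℚ) - n = y - x by linarith]
    calc |y - x| ≤ |y| + |x| := abs_sub _ _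
      _ < 2 := by linarith
  have : |m - n| < 2 := by exact_mod_cast hlt
  obtain ⟨k, hk⟩ := hmn
  rw [abs_lt] at this
  omega

def AllNonzeroEven (l : List ℤ) : Prop := ∀ a ∈ l, a ≠ 0 ∧ Even a

theorem allNonzeroEven_cons {a : ℤ} {l : List ℤ} :
    AllNonzeroEven (a :: l) ↔ (a ≠ 0 ∧ Even a) ∧ AllNonzeroEven l :=
  List.forall_mem_cons

@[simp] theorem cf_nil : cf [] = 0 := rfl

@[simp] theorem cf_cons (a : ℤ) (l : List ℤ) : cf (a :: l) = ((a : ℚ) + cf l)⁻¹ :=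
  one_div _

theorem one_lt_abs_intCast_add {a : ℤ} (ha : a ≠ 0) (ha2 : Even a) {x : ℚ} (hx : |x| < 1) :
    1 < |(a : ℚ) + x| := by
  have h2 : (2 : ℤ) ≤ |a| := by
    obtain ⟨k, rfl⟩ := ha2
    rcases abs_cases (k + k) with ⟨h, h'⟩ | ⟨h, h'⟩ <;> omega
  have h2' : (2 : ℚ) ≤ |(a : ℚ)| := by exact_mod_cast h2
  have := abs_sub_abs_le_abs_sub (a : ℚ) (-x)
  rw [abs_neg, sub_neg_eq_add] at this
  linarith

theorem abs_cf_lt_one {l : List ℤ} (hl : AllNonzeroEven l) : |cf l| < 1 := by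
  induction l with
  | nil => simp
  | cons a t ih =>
    obtain ⟨⟨ha, ha2⟩, ht⟩ := allNonzeroEven_cons.mp hl
    rw [cf_cons, abs_inv]
    exact inv_lt_one_of_one_lt₀ (one_lt_abs_intCast_add ha ha2 (ih ht))

theorem intCast_add_cf_ne_zero {a : ℤ} {l : List ℤ} (ha : a ≠ 0) (ha2 : Even a)
    (hl : AllNonzeroEven l) : (a : ℚ) + cf l ≠ 0 :=
  abs_pos.mp (one_pos.trans (one_lt_abs_intCast_add ha ha2 (abs_cf_lt_one hl)))

theorem cf_num_den_parity {l : List ℤ} (hl : AllNonzeroEven l) :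
    (Even (cf l).num ↔ Even l.length) ∧ (Odd (cf l).den ↔ Even l.length) := by
  induction l with
  | nil => simp
  | cons a t ih =>
    obtain ⟨⟨ha, ha2⟩, ht⟩ := allNonzeroEven_cons.mp hl
    have hne := intCast_add_cf_ne_zero ha ha2 ht
    obtain ⟨hnum, hden⟩ := ih ht
    rw [cf_cons, List.length_cons, Nat.even_add_one]
    constructor
    · rw [Rat.even_num_inv_iff hne, Rat.intCast_add_den, ← Nat.not_odd_iff_even, hden]
    · rw [← Nat.not_even_iff_odd, Rat.even_den_inv_intCast_add_iff ha2 hne, hnum]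

theorem cf_injective {l l' : List ℤ} (hl : AllNonzeroEven l) (hl' : AllNonzeroEven l')
    (h : cf l = cf l') : l = l' := by
  induction l generalizing l' with
  | nil =>
    cases l' with
    | nil => rfl
    | cons a t =>
      obtain ⟨⟨ha, ha2⟩, ht⟩ := allNonzeroEven_cons.mp hl'
      exact absurd h.symm (by simpa using intCast_add_cf_ne_zero ha ha2 ht)
  | cons a t ih =>
    obtain ⟨⟨ha, ha2⟩, ht⟩ := allNonzeroEven_cons.mp hl
    cases l' with
    | nil => exact absurd h (by simpa using intCast_add_cf_ne_zero ha ha2 ht)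
    | cons a' t' =>
      obtain ⟨⟨-, ha2'⟩, ht'⟩ := allNonzeroEven_cons.mp hl'
      have hsum : (a : ℚ) + cf t = a' + cf t' := inv_injective (by simpa using h)
      have haa : a = a' := eq_of_intCast_add_eq_intCast_add (abs_cf_lt_one ht)
        (abs_cf_lt_one ht') (ha2.sub ha2') hsum
      subst haa
      rw [ih ht ht' (add_left_cancel hsum)]

theorem exists_cf_eq {x : ℚ} (hx : |x| < 1) (hpar : Even x.num ∨ Even x.den) :
    ∃ l, AllNonzeroEven l ∧ cf l = x := by
  induction hn : x.den using Nat.strong_induction_on generalizing x with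
  | _ n ih =>
  subst hn
  rcases eq_or_ne x 0 with rfl | hx0
  · exact ⟨[], fun _ h => absurd h List.not_mem_nil, rfl⟩
  have hinv : ∀ n : ℤ, x⁻¹ = n → Even n := by
    intro n hn
    have hn0 : n ≠ 0 := by rintro rfl; simp [hx0] at hn
    rw [← inv_inv x, hn, Rat.inv_intCast_num, Rat.inv_intCast_den, if_neg hn0,
      ← Int.natAbs_even, Int.natAbs_sign_of_ne_zero hn0, Int.natAbs_even] at hpar
    simpa using hpar
  obtain ⟨a, ha2, ha⟩ := exists_even_sub_and_abs_sub_lt_one x⁻¹ 0 fun n hn => by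
    simpa using hinv n hn
  rw [sub_zero] at ha2
  set z := x⁻¹ - a with hz
  have hxz : x⁻¹ = a + z := by rw [hz, add_sub_cancel]
  have ha0 : a ≠ 0 := by
    rintro rfl
    rw [hz, Int.cast_zero, sub_zero, abs_inv] at ha
    exact (one_lt_inv₀ (abs_pos.mpr hx0)).mpr hx |>.not_gt ha
  have hzden : z.den = x.num.natAbs := by
    rw [hz, Rat.sub_intCast_den, Rat.den_inv_of_ne_zero hx0]
  have hznum : Even z.num ↔ Even x.den := by
    rw [← Rat.even_num_inv_iff hx0, hxz, Rat.num_intCast_add, Int.even_add]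
    simp [ha2]
  have hzpar : Even z.num ∨ Even z.den := by
    rw [hznum, hzden, Int.natAbs_even]; exact hpar.symm
  obtain ⟨l, hl, hcf⟩ :=
    ih z.den (hzden ▸ Rat.natAbs_num_lt_den_of_abs_lt_one hx) ha hzpar rfl
  refine ⟨a :: l, allNonzeroEven_cons.mpr ⟨⟨ha0, ha2⟩, hl⟩, ?_⟩
  rw [cf_cons, hcf, ← hxz, inv_inv]

theorem even_num_intCast_add_cf_iff (r : ℤ) {l : List ℤ} (hl : AllNonzeroEven l)
    (hlen : Even l.length) : Even ((r : ℚ) + cf l).num ↔ Even r := by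
  obtain ⟨hnum, hden⟩ := cf_num_den_parity hl
  rw [Rat.even_num_intCast_add_iff (hden.mpr hlen), iff_true_right (hnum.mpr hlen)]

theorem exists_intCast_add_cf_eq {x : ℚ} (hx : Odd x.den) :
    ∃ (r : ℤ) (l : List ℤ), Even l.length ∧ AllNonzeroEven l ∧ x = r + cf l := by
  obtain ⟨r, hr, hlt⟩ := exists_even_sub_and_abs_sub_lt_one x x.num fun n hn => by
    rw [hn, Rat.num_intCast, sub_self]; exact Even.zero
  set z := x - r with hz
  have hxz : x = r + z := by rw [hz, add_sub_cancel]
  have hzden : Odd z.den := by rwa [hz, Rat.sub_intCast_den]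
  have hznum : Even z.num := by
    have := Rat.even_num_intCast_add_iff hzden r
    rw [← hxz] at this
    rw [Int.even_sub] at hr
    tauto
  obtain ⟨l, hl, hcf⟩ := exists_cf_eq hlt (Or.inl hznum)
  exact ⟨r, l, (cf_num_den_parity hl).1.mp (hcf ▸ hznum), hl, by rw [hcf, hxz]⟩

theorem intCast_add_cf_injective {r r' : ℤ} {l l' : List ℤ} (hl : AllNonzeroEven l)
    (hlen : Even l.length) (hl' : AllNonzeroEven l') (hlen' : Even l'.length)
    (h : (r : ℚ) + cf l = r' + cf l') : r = r' ∧ l = l' := by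
  have hparity : Even (r - r') := by
    rw [Int.even_sub, ← even_num_intCast_add_cf_iff r hl hlen,
      ← even_num_intCast_add_cf_iff r' hl' hlen', h]
  have hr : r = r' :=
    eq_of_intCast_add_eq_intCast_add (abs_cf_lt_one hl) (abs_cf_lt_one hl') hparity h
  subst hr
  exact ⟨rfl, cf_injective hl hl' (add_left_cancel h)⟩

theorem unique_even_continued_fraction (p q : ℤ) (hq : Odd q) (hq0 : 0 < q)
    (hpq : IsCoprime p q) :
    (∃! rl : ℤ × List ℤ,
      Even rl.2.length ∧ (∀ a ∈ rl.2, a ≠ 0 ∧ Even a) ∧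
        (p : ℚ) / q = (rl.1 : ℚ) + cf rl.2) ∧
    ∀ (r : ℤ) (l : List ℤ), Even l.length → (∀ a ∈ l, a ≠ 0 ∧ Even a) →
      (p : ℚ) / q = (r : ℚ) + cf l → (Even p ↔ Even r) := by
  have hcop : Nat.Coprime p.natAbs q.natAbs := Int.isCoprime_iff_gcd_eq_one.mp hpq
  have hnum : ((p : ℚ) / q).num = p := Rat.num_div_eq_of_coprime hq0 hcop
  have hden : Odd ((p : ℚ) / q).den := by
    rw [← Int.odd_coe_nat, Rat.den_div_eq_of_coprime hq0 hcop]; exact hq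
  refine ⟨?_, fun r l hlen hl h => by
    rw [← hnum, h]; exact even_num_intCast_add_cf_iff r hl hlen⟩
  obtain ⟨r, l, hlen, hl, h⟩ := exists_intCast_add_cf_eq hden
  refine ⟨(r, l), ⟨hlen, hl, h⟩, ?_⟩
  rintro ⟨r', l'⟩ ⟨hlen', hl', h'⟩
  obtain ⟨rfl, rfl⟩ := intCast_add_cf_injective hl' hlen' hl hlen (h'.symm.trans h)
  rfl
end

section
/- For any vector a in S_even with nonempty a, any even integers m and n, and any natural numbers p and q, the iterated two-connector alternating construction satisfies (a^{2p+1}_{m,n})^{2q+1}_{m,n} = a^{(2p+1)(2q+1)}_{m,n}. -/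
/-!
Since even connectors are palindromes, reversing `a^{2k+1}_{m,n}` gives `(a⁻¹)^{2k+1}_{n,m}`.
So in `(a^{2p+1}_{m,n})^{2q+1}_{m,n}` every reversed block is again an alternating word in `a`
and `a⁻¹` with the connectors still alternating `m, n`, and the whole word is
`a^{2N+1}_{m,n}` with `2N + 1 = (2p+1)(2q+1)`.
-/

/-- `a` is an expanded even vector of even length: each entry is `-2`, `0`, or `2`,
the length is even, the first and last entries are nonzero, and every zero entry is
flanked by equal nonzero entries. -/
def SEven (a : List ℤ) : Prop :=
  Even a.length ∧ (∀ x ∈ a, x = -2 ∨ x = 0 ∨ x = 2) ∧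
    (∀ x, a.head? = some x → x ≠ 0) ∧ (∀ x, a.getLast? = some x → x ≠ 0) ∧
    (∀ i : ℕ, a[i]? = some 0 →
      ∃ x, x ≠ 0 ∧ a[i - 1]? = some x ∧ a[i + 1]? = some x)

/-- The number of sign changes in `a`: pairs of consecutive nonzero entries
(zeros skipped) with opposite signs. -/
def signChanges (a : List ℤ) : ℕ :=
  let nz := a.filter (· ≠ 0)
  (nz.zip nz.tail).countP (fun p => p.1 * p.2 < 0)

/-- `cr a` = sum of absolute values of entries of `a` minus the number of sign changes. -/
def cr (a : List ℤ) : ℕ := (a.map Int.natAbs).sum - signChanges a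

/-- The connector vector of an even integer `c`: `(0)` if `c = 0`, and otherwise
`±(2, 0, 2, 0, ..., 2)` with entries summing to `c`. -/
def cvec (c : ℤ) : List ℤ :=
  if c = 0 then [0]
  else (List.range (c.natAbs - 1)).map
    (fun i => if i % 2 = 0 then (if 0 < c then 2 else -2) else 0)

/-- `altpow a m n k` is the two-connector alternating vector
`a^{2k+1}_{m,n} = (a, m, a⁻¹, n, a, m, a⁻¹, n, ..., a)` with `2k+1` alternating
copies of `a` and its reverse, separated by alternating connectors `m` and `n`. -/
def altpow (a : List ℤ) (m n : ℤ) : ℕ → List ℤ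
  | 0 => a
  | k + 1 => altpow a m n k ++ cvec m ++ a.reverse ++ cvec n ++ a

-- The length `|c| - 1` is odd, so position `i` and its mirror `|c| - 2 - i` have the same parity.
lemma reverse_cvec {c : ℤ} (hc : Even c) : (cvec c).reverse = cvec c := by
  unfold cvec
  by_cases hc0 : c = 0
  · rw [if_pos hc0]; rfl
  · rw [if_neg hc0]
    have hodd : c.natAbs % 2 = 0 := Nat.even_iff.mp (Int.natAbs_even.mpr hc)
    have hpos : 0 < c.natAbs := Int.natAbs_pos.mpr hc0
    refine List.ext_getElem (by simp) fun i _ hi => ?_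
    simp only [List.length_map, List.length_range] at hi
    simp only [List.getElem_reverse, List.getElem_map, List.getElem_range, List.length_map,
      List.length_range]
    rw [show (c.natAbs - 1 - 1 - i) % 2 = i % 2 by omega]

section altpow

variable {a : List ℤ} {m n : ℤ}

lemma altpow_append_altpow (j k : ℕ) :
    altpow a m n j ++ cvec m ++ a.reverse ++ cvec n ++ altpow a m n k =
      altpow a m n (j + k + 1) := by
  induction k with
  | zero => rfl
  | succ k ih =>
    rw [← Nat.add_assoc, altpow.eq_2 a m n (j + k + 1), ← ih, altpow.eq_2 a m n k]
    simp only [List.append_assoc]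

lemma altpow_succ' (k : ℕ) :
    altpow a m n (k + 1) = a ++ cvec m ++ a.reverse ++ cvec n ++ altpow a m n k := by
  simpa [altpow] using (altpow_append_altpow (a := a) (m := m) (n := n) 0 k).symm

lemma reverse_altpow (hm : Even m) (hn : Even n) (k : ℕ) :
    (altpow a m n k).reverse = altpow a.reverse n m k := by
  induction k with
  | zero => rfl
  | succ k ih =>
    rw [altpow, altpow_succ' (a := a.reverse)]
    simp only [List.reverse_append, ih, reverse_cvec hm, reverse_cvec hn, List.reverse_reverse,
      List.append_assoc]

lemma altpow_append_altpow_reverse (j k : ℕ) :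
    altpow a m n j ++ cvec m ++ altpow a.reverse n m k =
      altpow a m n (j + k) ++ cvec m ++ a.reverse := by
  induction k with
  | zero => rfl
  | succ k ih =>
    rw [altpow, List.reverse_reverse, ← Nat.add_assoc]
    simp only [← List.append_assoc, ih]
    rfl

end altpow

theorem altpow_altpow_general (a : List ℤ)
    (m n : ℤ) (hm : Even m) (hn : Even n) (p q : ℕ) :
    altpow (altpow a m n p) m n q = altpow a m n (2 * p * q + p + q) := by
  induction q with
  | zero => simp only [Nat.mul_zero, Nat.add_zero, Nat.zero_add, altpow]
  | succ q ih =>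
    rw [altpow, ih, reverse_altpow hm hn, altpow_append_altpow_reverse,
      altpow_append_altpow]
    congr 1
    ring

theorem altpow_altpow (a : List ℤ) (ha : a ≠ []) (haS : SEven a)
    (m n : ℤ) (hm : Even m) (hn : Even n) (p q : ℕ) :
    altpow (altpow a m n p) m n q = altpow a m n (2 * p * q + p + q) :=
  altpow_altpow_general a m n hm hn p q
end
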